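/- arXiv:1803.05047 — 2 statements merged into one kernel-verified Lean document; each statement's English description precedes it below -/
import Mathlib

section
/- The 3×3 matrices satisfy the identities T·T = H²·T·H²·Z and T·H²·T = H². -/
open Matrix Complex

noncomputable section

/-- ω = exp(2πi/3), a primitive third root of unity. -/
def ω : ℂ := exp (2 * Real.pi * I / 3)

/-- ζ = exp(2πi/9), a primitive ninth root of unity. -/
def ζ : ℂ := exp (2 * Real.pi * I / 9)

/-- The qutrit Pauli X matrix. -/
def Xmat : Matrix (Fin 3) (Fin 3) ℂ := !![0,0,1; 1,0,0; 0,1,0]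

/-- The qutrit Pauli Z matrix. -/
def Zmat : Matrix (Fin 3) (Fin 3) ℂ := !![1,0,0; 0,ω,0; 0,0,ω^2]

/-- The qutrit Hadamard matrix H = (1/(i√3))·[[1,1,1],[1,ω,ω²],[1,ω²,ω]]. -/
def Hmat : Matrix (Fin 3) (Fin 3) ℂ :=
  (I * (Real.sqrt 3 : ℂ))⁻¹ • !![1,1,1; 1,ω,ω^2; 1,ω^2,ω]

/-- The qutrit phase matrix S = ζ⁸·diag(1,1,ω). -/
def Smat : Matrix (Fin 3) (Fin 3) ℂ := ζ^8 • !![1,0,0; 0,1,0; 0,0,ω]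

/-- The qutrit T matrix T = diag(1,ζ,ζ⁸). -/
def Tmat : Matrix (Fin 3) (Fin 3) ℂ := !![1,0,0; 0,ζ,0; 0,0,ζ^8]

lemma omega_ne_zero : ω ≠ 0 := Complex.exp_ne_zero _
lemma zeta_ne_zero : ζ ≠ 0 := Complex.exp_ne_zero _

lemma omega_im_pos : 0 < ω.im := by
  have h : ω = Complex.exp ((2 * Real.pi / 3 : ℝ) * I) := by
    rw [ω]; push_cast; ring_nf
  rw [h, Complex.exp_ofReal_mul_I_im]
  apply Real.sin_pos_of_pos_of_lt_pi
  · positivity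
  · nlinarith [Real.pi_pos]

lemma omega_ne_one : ω ≠ 1 := by
  intro h
  have := omega_im_pos
  rw [h] at this
  simp at this

lemma omega_cube : ω ^ 3 = 1 := by
  rw [ω, ← Complex.exp_nat_mul]
  rw [show (3:ℕ) * (2 * Real.pi * I / 3) = 2 * Real.pi * I by push_cast; ring]
  exact Complex.exp_two_pi_mul_I

lemma detX : Xmat.det ≠ 0 := by
  simp [Xmat, Matrix.det_fin_three]

lemma detZ : Zmat.det ≠ 0 := by
  simp [Zmat, Matrix.det_fin_three, omega_ne_zero]

lemma detS : Smat.det ≠ 0 := by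
  simp [Smat, Matrix.det_fin_three, omega_ne_zero, zeta_ne_zero]

lemma detT : Tmat.det ≠ 0 := by
  simp [Tmat, Matrix.det_fin_three, zeta_ne_zero]

lemma detH : Hmat.det ≠ 0 := by
  rw [Hmat, Matrix.det_smul]
  apply mul_ne_zero
  · apply pow_ne_zero
    apply inv_ne_zero
    apply mul_ne_zero Complex.I_ne_zero
    simp [Complex.ofReal_ne_zero]
  · rw [Matrix.det_fin_three]
    simp [Matrix.vecHead, Matrix.vecTail]
    intro h
    have h3 : ω ^ 3 = 1 := omega_cube
    have key : 3 * ω * (ω - 1) = 0 := by linear_combination h + ω * h3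
    rcases mul_eq_zero.mp key with h' | h'
    · rcases mul_eq_zero.mp h' with h'' | h''
      · norm_num at h''
      · exact omega_ne_zero h''
    · exact omega_ne_one (by linear_combination h')

/-- X as an element of GL(3, ℂ). -/
def Xg : GL (Fin 3) ℂ := Matrix.GeneralLinearGroup.mkOfDetNeZero Xmat detX

/-- Z as an element of GL(3, ℂ). -/
def Zg : GL (Fin 3) ℂ := Matrix.GeneralLinearGroup.mkOfDetNeZero Zmat detZ

/-- H as an element of GL(3, ℂ). -/
def Hg : GL (Fin 3) ℂ := Matrix.GeneralLinearGroup.mkOfDetNeZero Hmat detH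

/-- S as an element of GL(3, ℂ). -/
def Sg : GL (Fin 3) ℂ := Matrix.GeneralLinearGroup.mkOfDetNeZero Smat detS

/-- T as an element of GL(3, ℂ). -/
def Tg : GL (Fin 3) ℂ := Matrix.GeneralLinearGroup.mkOfDetNeZero Tmat detT

/-- The Clifford group 𝒞: the subgroup of GL(3,ℂ) generated by H and S. -/
def Cliff : Subgroup (GL (Fin 3) ℂ) := Subgroup.closure {Hg, Sg}

/-- The Clifford+T group: the subgroup of GL(3,ℂ) generated by H, S and T. -/
def CliffT : Subgroup (GL (Fin 3) ℂ) := Subgroup.closure {Hg, Sg, Tg}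

/-- The subgroup 𝒮 of GL(3,ℂ) generated by S and X. -/
def Sgrp : Subgroup (GL (Fin 3) ℂ) := Subgroup.closure {Sg, Xg}

/-- Letters of words over the alphabet {H, S, T}. -/
inductive Letter : Type
  | H : Letter
  | S : Letter
  | T : Letter
  deriving DecidableEq

/-- The gate associated to a letter. -/
def Letter.g : Letter → GL (Fin 3) ℂ
  | .H => Hg
  | .S => Sg
  | .T => Tg

/-- The product of the letters of a word. -/
def wordProd (w : List Letter) : GL (Fin 3) ℂ := (w.map Letter.g).prod

/-- The allowed prefixes of a canonical form: ε, T, H²T. -/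
def Prefixes : Set (List Letter) := {[], [.T], [.H, .H, .T]}

/-- The allowed syllables of a canonical form: HT, H³T, SHT, SH³T, S²HT, S²H³T. -/
def Syllables : Set (List Letter) :=
  {[.H, .T], [.H, .H, .H, .T], [.S, .H, .T],
   [.S, .H, .H, .H, .T], [.S, .S, .H, .T], [.S, .S, .H, .H, .H, .T]}

/-- The T-count of a canonical form with prefix `p` and syllable list `ss`:
`k` if the prefix is empty and `k+1` otherwise, where `k` is the number of syllables. -/
def TCount (p : List Letter) (ss : List (List Letter)) : ℕ :=
  ss.length + (if p = [] then 0 else 1)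

/-- P₊ = (P + P²)/√6. -/
def Pplus (P : Matrix (Fin 3) (Fin 3) ℂ) : Matrix (Fin 3) (Fin 3) ℂ :=
  ((Real.sqrt 6 : ℂ))⁻¹ • (P + P ^ 2)

/-- P₋ = i(P − P²)/√6. -/
def Pminus (P : Matrix (Fin 3) (Fin 3) ℂ) : Matrix (Fin 3) (Fin 3) ℂ :=
  (I * ((Real.sqrt 6 : ℂ))⁻¹) • (P - P ^ 2)

/-- The ordered tuple (Q₁, …, Q₈) = (Z₊, X₊, (XZ)₊, (XZ²)₊, Z₋, X₋, (XZ)₋, (XZ²)₋). -/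
def Q : Fin 8 → Matrix (Fin 3) (Fin 3) ℂ :=
  ![Pplus Zmat, Pplus Xmat, Pplus (Xmat * Zmat), Pplus (Xmat * Zmat ^ 2),
    Pminus Zmat, Pminus Xmat, Pminus (Xmat * Zmat), Pminus (Xmat * Zmat ^ 2)]

/-- The adjoint representation Û of U, the 8×8 real matrix with
entries Û_{ij} = tr(Qᵢ U Qⱼ U†). -/
def adj (U : Matrix (Fin 3) (Fin 3) ℂ) : Matrix (Fin 8) (Fin 8) ℝ :=
  Matrix.of fun i j => (Matrix.trace (Q i * U * Q j * Uᴴ)).re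

/-- The top-left 4×4 quadrant Û₊₊. -/
def blockPP (A : Matrix (Fin 8) (Fin 8) ℝ) : Matrix (Fin 4) (Fin 4) ℝ :=
  Matrix.of fun i j => A ⟨i.val, by omega⟩ ⟨j.val, by omega⟩

/-- The top-right 4×4 quadrant Û₊₋. -/
def blockPM (A : Matrix (Fin 8) (Fin 8) ℝ) : Matrix (Fin 4) (Fin 4) ℝ :=
  Matrix.of fun i j => A ⟨i.val, by omega⟩ ⟨j.val + 4, by omega⟩

/-- The bottom-left 4×4 quadrant Û₋₊. -/
def blockMP (A : Matrix (Fin 8) (Fin 8) ℝ) : Matrix (Fin 4) (Fin 4) ℝ :=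
  Matrix.of fun i j => A ⟨i.val + 4, by omega⟩ ⟨j.val, by omega⟩

/-- The bottom-right 4×4 quadrant Û₋₋. -/
def blockMM (A : Matrix (Fin 8) (Fin 8) ℝ) : Matrix (Fin 4) (Fin 4) ℝ :=
  Matrix.of fun i j => A ⟨i.val + 4, by omega⟩ ⟨j.val + 4, by omega⟩

/-- α = sin(2π/9). -/
def αR : ℝ := Real.sin (2 * Real.pi / 9)

/-- The ring ℤ[α]: the subring of ℝ generated by 1/2 and α. -/
def Zα : Subring ℝ := Subring.closure {1/2, αR}

/-- The ring ℤ[1/2, 1/α]: the subring of ℝ generated by 1/2, α and α⁻¹. -/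
def Zhα : Subring ℝ := Subring.closure {1/2, αR, αR⁻¹}

lemma alpha_mem_Zα : αR ∈ Zα := Subring.subset_closure (by simp)

lemma zeta_pow_nine' : ζ ^ 9 = 1 := by
  rw [ζ, ← Complex.exp_nat_mul]
  rw [show (9:ℕ) * (2 * Real.pi * I / 9) = 2 * Real.pi * I by push_cast; ring]
  exact Complex.exp_two_pi_mul_I

lemma omega_eq_zeta_cubed' : ω = ζ ^ 3 := by
  rw [ω, ζ, ← Complex.exp_nat_mul]
  congr 1
  push_cast; ring

lemma omega_one_add' : 1 + ω + ω ^ 2 = 0 := by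
  have h := omega_cube
  have key : (ω - 1) * (1 + ω + ω ^ 2) = 0 := by linear_combination h
  exact (mul_eq_zero.mp key).resolve_left (sub_ne_zero.mpr omega_ne_one)

lemma H_sq' : Hmat ^ 2 = -!![1,0,0; 0,0,1; 0,1,0] := by
  have h3 : ((Real.sqrt 3 : ℂ))^2 = 3 := by
    norm_cast
    rw [Real.sq_sqrt]; norm_num
  have hI : (I * (Real.sqrt 3 : ℂ))⁻¹ ^ 2 = -(3:ℂ)⁻¹ := by
    rw [inv_pow, mul_pow, Complex.I_sq, h3]
    norm_num
  have hI' : (I * (Real.sqrt 3 : ℂ))⁻¹ * (I * (Real.sqrt 3 : ℂ))⁻¹ = -(3:ℂ)⁻¹ := by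
    rw [← pow_two]; exact hI
  have hc : ω ^ 3 = 1 := omega_cube
  have hsum := omega_one_add'
  have h4 : ω ^ 4 = ω := by linear_combination ω * hc
  rw [Hmat, pow_two, smul_mul_smul_comm, hI', ← pow_two]
  ext i j
  fin_cases i <;> fin_cases j <;>
    simp [pow_two, Matrix.mul_apply, Fin.sum_univ_succ, Matrix.vecHead, Matrix.vecTail, h4, hc] <;>
    first
      | linear_combination hsum
      | linear_combination -hsum
      | linear_combination ω * hsum
      | linear_combination -ω * hsum
      | linear_combination hsum + ω * hc
      | linear_combination -hsum - ω * hc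
      | linear_combination (2/3 : ℂ) * hc
      | linear_combination hc
      | ring_nf

/-- The 3×3 matrices satisfy the identities T·T = H²·T·H²·Z and
T·H²·T = H². -/
theorem T_T_and_T_H2_T_identities :
    Tmat * Tmat = Hmat ^ 2 * Tmat * Hmat ^ 2 * Zmat ∧
    Tmat * Hmat ^ 2 * Tmat = Hmat ^ 2 := by
  have h9 := zeta_pow_nine'
  have hω := omega_eq_zeta_cubed'
  rw [H_sq']
  constructor <;>
  · ext i j
    fin_cases i <;> fin_cases j <;>
      simp [Tmat, Zmat, Matrix.mul_apply, Fin.sum_univ_succ, Matrix.vecHead, Matrix.vecTail, hω] <;>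
      first
        | linear_combination ζ^2 * h9
        | linear_combination ζ^7 * h9
        | linear_combination h9
        | linear_combination (-1 : ℂ) * h9
        | linear_combination -ζ^2 * h9
        | ring_nf

end
end

section
/- In the ring ℤ[α] (the subring of ℝ generated by 1/2 and α = sin(2π/9)), the principal ideal (α) is maximal and the quotient ring ℤ[α]/(α) is isomorphic to ℤ/3ℤ. Consequently, for q ∈ ℤ[1/2,1/α] and k ≥ 1 a denominator exponent of q, k is the least denominator exponent of q if and only if the image of α^k·q in ℤ[α]/(α) is nonzero. -/
open Matrix Complex

noncomputable section

/-! With `β = 2α`, a root of the `3`-Eisenstein polynomial `X⁶ - 6X⁴ + 9X² - 3`, we get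
`3 = α (64α⁵ - 96α³ + 36α)`, and `1/2 ≡ 2` modulo `3`; so every element of `ℤ[α]` is congruent
modulo `(α)` to an integer, and `ℤ → ℤ[α]/(α)` is onto with `3` in its kernel. The ideal `(α)` is
proper: if `α y = 1` and `2ⁿ y = p(β)`, then `X p - 2ⁿ⁺¹` vanishes at `β`, hence is divisible by
the minimal polynomial of `β` over `ℤ`, and comparing constant terms gives `3 ∣ 2ⁿ⁺¹`.
For the criterion, `αᵏ q ∈ (α)` iff `αᵏ⁻¹ q ∈ ℤ[α]`, and the denominator exponents of `q` form
an upward closed set. -/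

open Polynomial

lemma two_mul_αR_root : (2 * αR) ^ 6 - 6 * (2 * αR) ^ 4 + 9 * (2 * αR) ^ 2 - 3 = 0 := by
  have h := Real.sin_three_mul (2 * Real.pi / 9)
  rw [show 3 * (2 * Real.pi / 9) = Real.pi - Real.pi / 3 by ring, Real.sin_pi_sub,
    Real.sin_pi_div_three] at h
  have hsq : (3 * αR - 4 * αR ^ 3) ^ 2 = 3 / 4 := by
    rw [αR, ← h, div_pow, Real.sq_sqrt (by norm_num)]; norm_num
  linear_combination 4 * hsq

lemma irreducible_X_pow_six_sub_six_X_pow_four_add_nine_X_sq_sub_three :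
    Irreducible (X ^ 6 - 6 * X ^ 4 + 9 * X ^ 2 - 3 : ℤ[X]) := by
  set G : ℤ[X] := X ^ 6 - 6 * X ^ 4 + 9 * X ^ 2 - 3
  have hdeg : G.natDegree = 6 := by simp only [G]; compute_degree!
  have hprime : (Ideal.span {(3 : ℤ)}).IsPrime :=
    (Ideal.span_singleton_prime (by norm_num)).mpr Int.prime_three
  have heis : G.IsEisensteinAt (Ideal.span {(3 : ℤ)}) := by
    refine ⟨?_, fun {n} hn => ?_, ?_⟩
    · rw [leadingCoeff, hdeg, Ideal.mem_span_singleton]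
      simp [G, coeff_X_pow]
    · rw [hdeg] at hn
      rw [Ideal.mem_span_singleton]
      interval_cases n <;> simp [G, coeff_X_pow]
    · rw [Ideal.span_singleton_pow, Ideal.mem_span_singleton]
      simp [G, coeff_X_pow]
  have hmonic : G.Monic := by simp only [G]; monicity!
  exact heis.irreducible hprime hmonic.isPrimitive (by omega)

lemma aeval_two_mul_αR : aeval (2 * αR) (X ^ 6 - 6 * X ^ 4 + 9 * X ^ 2 - 3 : ℤ[X]) = 0 := by
  simpa [map_ofNat] using two_mul_αR_root

lemma isIntegral_two_mul_αR : IsIntegral ℤ (2 * αR) := ⟨_, by monicity!, aeval_two_mul_αR⟩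

lemma minpoly_two_mul_αR : minpoly ℤ (2 * αR) = X ^ 6 - 6 * X ^ 4 + 9 * X ^ 2 - 3 :=
  eq_of_monic_of_associated (minpoly.monic isIntegral_two_mul_αR) (by monicity!) <|
    (minpoly.irreducible isIntegral_two_mul_αR).associated_of_dvd
      irreducible_X_pow_six_sub_six_X_pow_four_add_nine_X_sq_sub_three
      (minpoly.isIntegrallyClosed_dvd isIntegral_two_mul_αR aeval_two_mul_αR)

lemma three_dvd_coeff_zero_of_aeval_eq_zero {p : ℤ[X]} (hp : aeval (2 * αR) p = 0) :
    3 ∣ p.coeff 0 := by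
  obtain ⟨g, rfl⟩ :=
    minpoly_two_mul_αR ▸ minpoly.isIntegrallyClosed_dvd isIntegral_two_mul_αR hp
  rw [mul_coeff_zero]
  exact dvd_mul_of_dvd_left (by simp [coeff_X_pow]) _

theorem exists_two_pow_mul_eq_aeval {K : Type*} [Field K] [NeZero (2 : K)] {a x : K}
    (hx : x ∈ Subring.closure {1 / 2, a}) :
    ∃ (n : ℕ) (p : ℤ[X]), 2 ^ n * x = aeval (2 * a) p := by
  induction hx using Subring.closure_induction with
  | mem x hx =>
    rcases hx with rfl | rfl
    · exact ⟨1, 1, by simp [two_ne_zero]⟩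
    · exact ⟨1, X, by simp⟩
  | zero => exact ⟨0, 0, by simp⟩
  | one => exact ⟨0, 1, by simp⟩
  | add x y _ _ ihx ihy =>
    obtain ⟨n, p, hp⟩ := ihx
    obtain ⟨m, q, hq⟩ := ihy
    refine ⟨n + m, 2 ^ m * p + 2 ^ n * q, ?_⟩
    simp only [map_add, map_mul, map_pow, map_ofNat, ← hp, ← hq]
    ring
  | neg x _ ih =>
    obtain ⟨n, p, hp⟩ := ih
    exact ⟨n, -p, by simp [← hp]⟩
  | mul x y _ _ ihx ihy =>
    obtain ⟨n, p, hp⟩ := ihx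
    obtain ⟨m, q, hq⟩ := ihy
    exact ⟨n + m, p * q, by rw [map_mul, ← hp, ← hq]; ring⟩

theorem Ideal.Quotient.nonempty_ringEquiv_zmod {R : Type*} [CommRing R] {I : Ideal R} (p : ℕ)
    [Fact p.Prime] (hsurj : Function.Surjective (algebraMap ℤ (R ⧸ I))) (hp : (p : R) ∈ I)
    (hI : I ≠ ⊤) : Nonempty (R ⧸ I ≃+* ZMod p) := by
  have : Nontrivial (R ⧸ I) := Ideal.Quotient.nontrivial_iff.mpr hI
  have hker : Ideal.span {(p : ℤ)} = RingHom.ker (algebraMap ℤ (R ⧸ I)) := by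
    refine (Int.ideal_span_isMaximal_of_prime p).eq_of_le (RingHom.ker_ne_top _) ?_
    rwa [Ideal.span_singleton_le_iff_mem, RingHom.mem_ker, map_natCast,
      ← map_natCast (Ideal.Quotient.mk I), Ideal.Quotient.eq_zero_iff_mem]
  exact ⟨(RingHom.quotientKerEquivOfSurjective hsurj).symm.trans <|
    (Ideal.quotEquivOfEq hker.symm).trans (Int.quotientSpanNatEquivZMod p)⟩

theorem Subring.mem_span_singleton_iff_of_eq_mul {K : Type*} [CommRing K] [IsDomain K]
    {S : Subring K} {a y : K} (ha : a ∈ S) (ha₀ : a ≠ 0) {x : S} (hx : (x : K) = a * y) :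
    x ∈ Ideal.span {⟨a, ha⟩} ↔ y ∈ S := by
  rw [Ideal.mem_span_singleton']
  constructor
  · rintro ⟨c, rfl⟩
    have hc : (c : K) = y := mul_left_cancel₀ ha₀ (by rw [← hx, mul_comm]; rfl)
    exact hc ▸ c.2
  · intro hy
    exact ⟨⟨y, hy⟩, Subtype.ext (by rw [hx, mul_comm]; rfl)⟩

theorem IsUpperSet.isLeast_succ_iff {s : Set ℕ} (hs : IsUpperSet s) (k : ℕ) :
    IsLeast s (k + 1) ↔ k + 1 ∈ s ∧ k ∉ s := by
  refine ⟨fun h => ⟨h.1, fun hk => by simpa using h.2 hk⟩, fun ⟨hk, hnk⟩ => ⟨hk, fun m hm => ?_⟩⟩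
  by_contra! hlt
  exact hnk (hs (Nat.le_of_lt_succ hlt) hm)

theorem Subring.isUpperSet_setOf_pow_mul_mem {K : Type*} [CommRing K] {S : Subring K} {a : K}
    (ha : a ∈ S) (q : K) : IsUpperSet {m : ℕ | a ^ m * q ∈ S} := by
  intro m n hmn hm
  obtain ⟨d, rfl⟩ := Nat.exists_eq_add_of_le hmn
  rw [Set.mem_ofPred_eq, pow_add, mul_comm (a ^ m), mul_assoc]
  exact mul_mem (pow_mem ha d) hm

local notation "α" => (Subtype.mk αR alpha_mem_Zα : Zα)

lemma αR_ne_zero : αR ≠ 0 :=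
  (Real.sin_pos_of_pos_of_lt_pi (by positivity) (by linarith [Real.pi_pos])).ne'

lemma three_mem_span_α : (3 : Zα) ∈ Ideal.span {α} :=
  Ideal.mem_span_singleton'.mpr ⟨64 * α ^ 5 - 96 * α ^ 3 + 36 * α,
    Zα.subtype_injective <| by
      simp only [map_mul, map_sub, map_add, map_pow, map_ofNat, Subring.subtype_apply]
      linear_combination two_mul_αR_root⟩

lemma span_α_ne_top : Ideal.span {α} ≠ ⊤ := by
  rw [Ne, Ideal.eq_top_iff_one, Ideal.mem_span_singleton']
  rintro ⟨y, hy⟩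
  obtain ⟨n, p, hp⟩ := exists_two_pow_mul_eq_aeval y.2
  have hroot : aeval (2 * αR) (X * p - C (2 ^ (n + 1))) = 0 := by
    have hy' : (y : ℝ) * αR = 1 := congrArg Subtype.val hy
    simp only [map_sub, map_mul, map_pow, map_ofNat, aeval_X, ← hp]
    linear_combination 2 ^ (n + 1) * hy'
  have h3 := three_dvd_coeff_zero_of_aeval_eq_zero hroot
  rw [coeff_sub, coeff_X_mul_zero, coeff_C_zero, zero_sub, dvd_neg] at h3
  have := Int.prime_three.dvd_of_dvd_pow h3
  norm_num at this

lemma surjective_algebraMap_int_quotient_span_α :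
    Function.Surjective (algebraMap ℤ (Zα ⧸ Ideal.span {α})) := by
  set π := Ideal.Quotient.mk (Ideal.span {α})
  have h3 : (3 : Zα ⧸ Ideal.span {α}) = 0 := by
    rw [← map_ofNat π, Ideal.Quotient.eq_zero_iff_mem]
    exact three_mem_span_α
  suffices h : ∀ x (hx : x ∈ Zα), π ⟨x, hx⟩ ∈ (algebraMap ℤ (Zα ⧸ Ideal.span {α})).range by
    intro y
    obtain ⟨⟨x, hx⟩, rfl⟩ := Ideal.Quotient.mk_surjective y
    exact h x hx
  intro x hx
  induction hx using Subring.closure_induction with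
  | mem x hx =>
    rcases hx with rfl | rfl
    · set half : Zα := ⟨1 / 2, Subring.subset_closure (by simp)⟩
      have hinv : π half * 2 = 1 := by
        rw [← map_ofNat π, ← map_mul, ← map_one π]
        refine congrArg π (Zα.subtype_injective ?_)
        simp only [map_mul, map_ofNat, map_one, Subring.subtype_apply, half]
        norm_num
      -- `3 = 0` in the quotient, so `1 / 2 = 4 / 2 = 2` there
      refine ⟨2, ?_⟩
      change _ = π half
      rw [map_ofNat]
      linear_combination π half * h3 - 2 * hinv
    · exact ⟨0, by simp [π]⟩
  | zero => exact zero_mem _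
  | one => exact one_mem _
  | add _ _ _ _ ihx ihy => exact add_mem ihx ihy
  | neg _ _ ih => exact neg_mem ih
  | mul _ _ _ _ ihx ihy => exact mul_mem ihx ihy

/-- In the ring ℤ[α], the principal ideal (α) is maximal and
ℤ[α]/(α) ≅ ℤ/3ℤ. Consequently, for q ∈ ℤ[1/2,1/α] and k ≥ 1 a denominator exponent
of q, k is the least denominator exponent of q if and only if the image of α^k·q in
ℤ[α]/(α) is nonzero. -/
theorem residue_ring_and_LDE_criterion :
    (Ideal.span {(⟨αR, alpha_mem_Zα⟩ : Zα)}).IsMaximal ∧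
    Nonempty ((Zα ⧸ Ideal.span {(⟨αR, alpha_mem_Zα⟩ : Zα)}) ≃+* ZMod 3) ∧
    (∀ q : ℝ, q ∈ Zhα → ∀ k : ℕ, 1 ≤ k → ∀ h : αR ^ k * q ∈ Zα,
      (IsLeast {m : ℕ | αR ^ m * q ∈ Zα} k ↔
        Ideal.Quotient.mk (Ideal.span {(⟨αR, alpha_mem_Zα⟩ : Zα)})
          (⟨αR ^ k * q, h⟩ : Zα) ≠ 0)) := by
  obtain ⟨e⟩ := Ideal.Quotient.nonempty_ringEquiv_zmod 3
    surjective_algebraMap_int_quotient_span_α (by exact_mod_cast three_mem_span_α) span_α_ne_top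
  refine ⟨Ideal.Quotient.maximal_of_isField _ (e.toMulEquiv.isField (Field.toIsField _)), ⟨e⟩, ?_⟩
  intro q _ k hk h
  obtain ⟨j, rfl⟩ := Nat.exists_eq_add_of_le' hk
  rw [(Subring.isUpperSet_setOf_pow_mul_mem alpha_mem_Zα q).isLeast_succ_iff, ne_eq,
    Ideal.Quotient.eq_zero_iff_mem,
    Subring.mem_span_singleton_iff_of_eq_mul alpha_mem_Zα αR_ne_zero (y := αR ^ j * q) (by ring)]
  exact and_iff_right h

end
end
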